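/- arXiv:math/0411487 — 3 statements merged into one kernel-verified Lean document; each statement's English description precedes it below -/
import Mathlib

section
/- Let F(z) = z²/2 − 2z + log z. For t ∈ [0,2], the derivative with respect to t of Re(F(1 + t·e^{2πi/3})) equals (1/2)·t²(2−t)/(1 − t + t²), and hence is nonnegative; in particular t ↦ Re(F(1 + t·e^{2πi/3})) is monotone nondecreasing on [0,2]. -/
open Complex

/-!
Writing `z = 1 + t e^{2πi/3}`, one has `Re z = 1 - t/2`, `Im z = (√3/2) t` and
`|z|² = 1 - t + t²`, so `Re F(z) = -3/2 + t/2 - t²/4 + ½ log (1 - t + t²)`.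
Differentiating this closed form gives `½ t² (2 - t) / (1 - t + t²)`, which is nonnegative on `[0, 2]` because `1 - t + t² > 0`.
-/

noncomputable def rayProfile (t : ℝ) : ℝ :=
  -3 / 2 + t / 2 - t ^ 2 / 4 + Real.log (1 - t + t ^ 2) / 2

lemma one_sub_add_sq_pos (t : ℝ) : 0 < 1 - t + t ^ 2 := by
  nlinarith [sq_nonneg (t - 1 / 2)]

lemma exp_two_pi_div_three_mul_I :
    exp (((2 * Real.pi / 3 : ℝ) : ℂ) * I) = -1 / 2 + (Real.sqrt 3 / 2 : ℝ) * I := by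
  have hcos : Real.cos (2 * Real.pi / 3) = -(1 / 2) := by
    rw [show 2 * Real.pi / 3 = Real.pi - Real.pi / 3 by ring, Real.cos_pi_sub,
      Real.cos_pi_div_three]
  have hsin : Real.sin (2 * Real.pi / 3) = Real.sqrt 3 / 2 := by
    rw [show 2 * Real.pi / 3 = Real.pi - Real.pi / 3 by ring, Real.sin_pi_sub,
      Real.sin_pi_div_three]
  rw [exp_mul_I, ← ofReal_cos, ← ofReal_sin, hcos, hsin]
  push_cast
  ring

lemma re_sq_div_two_sub_two_mul_add_log (z : ℂ) :
    (z ^ 2 / 2 - 2 * z + log z).re = (z.re ^ 2 - z.im ^ 2) / 2 - 2 * z.re + Real.log ‖z‖ := by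
  simp [sq, log_re]

lemma re_sq_div_two_sub_two_mul_add_log_along_ray (t : ℝ) :
    let z := 1 + (t : ℂ) * exp (((2 * Real.pi / 3 : ℝ) : ℂ) * I)
    (z ^ 2 / 2 - 2 * z + log z).re = rayProfile t := by
  rw [exp_two_pi_div_three_mul_I]
  intro z
  have hz : z = (1 - t / 2 : ℝ) + (t * (Real.sqrt 3 / 2) : ℝ) * I := by
    simp only [z]; push_cast; ring
  have hre : z.re = 1 - t / 2 := by simp [hz]
  have him : z.im = t * (Real.sqrt 3 / 2) := by simp [hz]
  have h3 : Real.sqrt 3 ^ 2 = 3 := Real.sq_sqrt (by norm_num)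
  have hnorm : ‖z‖ = Real.sqrt (1 - t + t ^ 2) := by
    rw [norm_def, normSq_apply, hre, him]
    congr 1
    nlinarith [h3]
  rw [re_sq_div_two_sub_two_mul_add_log, hre, him, hnorm,
    Real.log_sqrt (one_sub_add_sq_pos t).le, rayProfile]
  nlinarith [h3]

lemma hasDerivAt_rayProfile (t : ℝ) :
    HasDerivAt rayProfile ((1 / 2) * t ^ 2 * (2 - t) / (1 - t + t ^ 2)) t := by
  have hquad : HasDerivAt (fun t : ℝ => 1 - t + t ^ 2) (2 * t - 1) t :=
    (((hasDerivAt_id t).const_sub 1).add (hasDerivAt_pow 2 t)).congr_deriv <| by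
      simp only [Nat.cast_ofNat, Nat.add_one_sub_one, pow_one]; ring
  have hpoly : HasDerivAt (fun t : ℝ => -3 / 2 + t / 2 - t ^ 2 / 4) (1 / 2 - t / 2) t :=
    ((((hasDerivAt_id t).div_const 2).const_add (-3 / 2)).sub
      ((hasDerivAt_pow 2 t).div_const 4)).congr_deriv <| by
        simp only [Nat.cast_ofNat, Nat.add_one_sub_one, pow_one]; ring
  refine (hpoly.add ((hquad.log (one_sub_add_sq_pos t).ne').div_const 2)).congr_deriv ?_
  field_simp [(one_sub_add_sq_pos t).ne']
  ring

lemma rayProfile_deriv_nonneg {t : ℝ} (ht : t ∈ Set.Icc (0 : ℝ) 2) :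
    0 ≤ (1 / 2) * t ^ 2 * (2 - t) / (1 - t + t ^ 2) := by
  have h2t : 0 ≤ 2 - t := by linarith [ht.2]
  have := one_sub_add_sq_pos t
  positivity

lemma monotoneOn_rayProfile : MonotoneOn rayProfile (Set.Icc 0 2) := by
  refine monotoneOn_of_deriv_nonneg (convex_Icc 0 2)
    (fun t _ => (hasDerivAt_rayProfile t).continuousAt.continuousWithinAt)
    (fun t _ => (hasDerivAt_rayProfile t).differentiableAt.differentiableWithinAt) ?_
  intro t ht
  rw [interior_Icc] at ht
  rw [(hasDerivAt_rayProfile t).deriv]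
  exact rayProfile_deriv_nonneg (Set.Ioo_subset_Icc_self ht)

/-- For `F z = z²/2 − 2z + log z` and `g t = Re (F (1 + t e^{2πi/3}))`, for `t ∈ [0,2]`
the derivative of `g` at `t` equals `(1/2) t² (2−t)/(1−t+t²)`, is nonnegative, and `g`
is monotone nondecreasing on `[0,2]`. -/
theorem stmt_1 (F : ℂ → ℂ) (hF : ∀ z : ℂ, F z = z ^ 2 / 2 - 2 * z + Complex.log z)
    (g : ℝ → ℝ)
    (hg : ∀ t : ℝ, g t =
      (F (1 + (t : ℂ) * Complex.exp (((2 * Real.pi / 3 : ℝ) : ℂ) * Complex.I))).re) :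
    (∀ t ∈ Set.Icc (0 : ℝ) 2,
        HasDerivAt g ((1 / 2) * t ^ 2 * (2 - t) / (1 - t + t ^ 2)) t ∧
        0 ≤ (1 / 2) * t ^ 2 * (2 - t) / (1 - t + t ^ 2)) ∧
    MonotoneOn g (Set.Icc (0 : ℝ) 2) := by
  obtain rfl : g = rayProfile := funext fun t => by
    rw [hg, hF]
    exact re_sq_div_two_sub_two_mul_add_log_along_ray t
  exact ⟨fun t ht => ⟨hasDerivAt_rayProfile t, rayProfile_deriv_nonneg ht⟩,
    monotoneOn_rayProfile⟩
end

section
/- Let F(z) = z²/2 − 2z + log z and fix t₀ > 0, w* = 1 + t₀·e^{iπ/3}. With C₀ = 1 − 1/|w*|², one has C₀ > 0 and for all t ≥ 0, Re(F(w* + i·t)) ≤ Re(F(w*)) − C₀·t²/2. -/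
/-- For `F z = z²/2 − 2z + log z`, `t₀ > 0`, `w* = 1 + t₀ e^{iπ/3}` and
`C₀ = 1 − 1/|w*|²`, one has `C₀ > 0` and for all `t ≥ 0`,
`Re (F (w* + i t)) ≤ Re (F w*) − C₀ t²/2`. -/
theorem stmt_4 (F : ℂ → ℂ) (hF : ∀ z : ℂ, F z = z ^ 2 / 2 - 2 * z + Complex.log z)
    (t₀ : ℝ) (ht₀ : 0 < t₀) (wstar : ℂ)
    (hw : wstar = 1 + (t₀ : ℂ) * Complex.exp (((Real.pi / 3 : ℝ) : ℂ) * Complex.I))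
    (C₀ : ℝ) (hC : C₀ = 1 - 1 / ‖wstar‖ ^ 2) :
    0 < C₀ ∧ ∀ t : ℝ, 0 ≤ t →
      (F (wstar + Complex.I * (t : ℂ))).re ≤ (F wstar).re - C₀ * t ^ 2 / 2 := by
  set a := wstar.re with hA
  set b := wstar.im with hB
  have hre : a = 1 + t₀ / 2 := by
    rw [hA, hw]
    simp only [Complex.add_re, Complex.mul_re, Complex.one_re, Complex.one_im,
      Complex.ofReal_re, Complex.ofReal_im, Complex.exp_ofReal_mul_I_re,
      Complex.exp_ofReal_mul_I_im, Real.cos_pi_div_three, Real.sin_pi_div_three]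
    ring
  have him : b = Real.sqrt 3 / 2 * t₀ := by
    rw [hB, hw]
    simp only [Complex.add_im, Complex.mul_im, Complex.one_re, Complex.one_im,
      Complex.ofReal_re, Complex.ofReal_im, Complex.exp_ofReal_mul_I_re,
      Complex.exp_ofReal_mul_I_im, Real.cos_pi_div_three, Real.sin_pi_div_three]
    ring
  have ha : 1 < a := by rw [hre]; linarith
  have hb : 0 < b := by
    rw [him]
    have : 0 < Real.sqrt 3 := Real.sqrt_pos.mpr (by norm_num)
    positivity
  have habs : ‖wstar‖ ^ 2 = a ^ 2 + b ^ 2 := by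
    rw [Complex.sq_norm, Complex.normSq_apply]; ring
  have hr2 : 1 < a ^ 2 + b ^ 2 := by nlinarith
  have hr2pos : 0 < a ^ 2 + b ^ 2 := by linarith
  have hC' : C₀ = 1 - 1 / (a ^ 2 + b ^ 2) := by rw [hC, habs]
  have hC0 : 0 < C₀ := by
    rw [hC']
    have : 1 / (a ^ 2 + b ^ 2) < 1 := by
      rw [div_lt_one hr2pos]; exact hr2
    linarith
  refine ⟨hC0, fun t ht => ?_⟩
  have hRe : ∀ u : ℂ, u ≠ 0 → (u ^ 2 / 2 - 2 * u + Complex.log u).re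
      = (u.re ^ 2 - u.im ^ 2) / 2 - 2 * u.re + Real.log (u.re ^ 2 + u.im ^ 2) / 2 := by
    intro u hu
    have hlog : (Complex.log u).re = Real.log (u.re ^ 2 + u.im ^ 2) / 2 := by
      rw [Complex.log_re, Complex.norm_def, Complex.normSq_apply,
        Real.log_sqrt (add_nonneg (mul_self_nonneg _) (mul_self_nonneg _))]
      ring_nf
    rw [Complex.add_re, Complex.sub_re, hlog]
    simp [pow_two, Complex.div_re, Complex.mul_re, Complex.mul_im, Complex.normSq_apply]
  have hzre : (wstar + Complex.I * (t : ℂ)).re = a := by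
    simp [Complex.add_re, Complex.mul_re, ← hA]
  have hzim : (wstar + Complex.I * (t : ℂ)).im = b + t := by
    simp [Complex.add_im, Complex.mul_im, ← hB]
  have hwne : wstar ≠ 0 := by
    intro h
    have h0 : a = 0 := by rw [hA, h, Complex.zero_re]
    linarith
  have hzne : wstar + Complex.I * (t : ℂ) ≠ 0 := by
    intro h
    have h0 : (wstar + Complex.I * (t : ℂ)).re = 0 := by rw [h, Complex.zero_re]
    rw [hzre] at h0
    linarith
  rw [hF, hF, hRe _ hzne, hRe _ hwne, hzre, hzim]
  have hlog : Real.log (a ^ 2 + (b + t) ^ 2) - Real.log (a ^ 2 + b ^ 2)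
      ≤ (2 * b * t + t ^ 2) * (a ^ 2 + b ^ 2)⁻¹ := by
    have h1 : Real.log (a ^ 2 + (b + t) ^ 2) - Real.log (a ^ 2 + b ^ 2)
        = Real.log ((a ^ 2 + (b + t) ^ 2) / (a ^ 2 + b ^ 2)) := by
      rw [Real.log_div (by positivity) (by positivity)]
    rw [h1]
    have h2 := Real.log_le_sub_one_of_pos
      (show 0 < (a ^ 2 + (b + t) ^ 2) / (a ^ 2 + b ^ 2) by positivity)
    have h3 : (a ^ 2 + (b + t) ^ 2) / (a ^ 2 + b ^ 2) - 1
        = (2 * b * t + t ^ 2) * (a ^ 2 + b ^ 2)⁻¹ := by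
      field_simp
      ring
    linarith [h3 ▸ h2]
  have hinv : (a ^ 2 + b ^ 2)⁻¹ < 1 := by
    rw [inv_lt_one_iff₀]; right; exact hr2
  have hkey : (2 * b * t + t ^ 2) * (a ^ 2 + b ^ 2)⁻¹
      ≤ (2 * b * t + t ^ 2) - C₀ * t ^ 2 := by
    rw [hC']
    have h4 : (2 * b * t + t ^ 2) - (1 - 1 / (a ^ 2 + b ^ 2)) * t ^ 2
        - (2 * b * t + t ^ 2) * (a ^ 2 + b ^ 2)⁻¹
        = 2 * b * t * (1 - (a ^ 2 + b ^ 2)⁻¹) := by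
      rw [one_div]; ring
    nlinarith [mul_nonneg (mul_nonneg (le_of_lt hb) ht) (le_of_lt (sub_pos.mpr hinv))]
  nlinarith [hlog, hkey]
end

section
/- Let H(x) = x³/3 − 3·2^{−2/3}x + log x (principal branch) and x_c = 2^{−1/3}. For every t > 0, the derivative d/dt Re(H(x_c + t·e^{2iπ/3})) equals t²·(t² − 2x_c t + 3x_c²)/(x_c² − x_c t + t²) > 0; in particular t ↦ Re(H(x_c + t·e^{2iπ/3})) is strictly increasing on (0,∞). -/
/-- Let `H z = z³/3 − 3·2^{−2/3} z + log z` (principal branch), `x_c = 2^{−1/3}`, and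
`g t = Re (H (x_c + t e^{2iπ/3}))`. For every `t > 0` the derivative of `g` at `t`
equals `t²(t² − 2 x_c t + 3 x_c²)/(x_c² − x_c t + t²)`, which is positive; hence `g`
is strictly increasing on `(0,∞)`. -/
theorem stmt_18 (H : ℂ → ℂ)
    (hH : ∀ z : ℂ, H z = z ^ 3 / 3 - (((3 : ℝ) * (2 : ℝ) ^ (-(2 : ℝ) / 3) : ℝ) : ℂ) * z +
      Complex.log z)
    (xc : ℝ) (hxc : xc = (2 : ℝ) ^ (-(1 : ℝ) / 3)) (g : ℝ → ℝ)
    (hg : ∀ t : ℝ, g t =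
      (H ((xc : ℂ) + (t : ℂ) * Complex.exp (((2 * Real.pi / 3 : ℝ) : ℂ) * Complex.I))).re) :
    (∀ t : ℝ, 0 < t →
        HasDerivAt g (t ^ 2 * (t ^ 2 - 2 * xc * t + 3 * xc ^ 2) / (xc ^ 2 - xc * t + t ^ 2)) t ∧
        0 < t ^ 2 * (t ^ 2 - 2 * xc * t + 3 * xc ^ 2) / (xc ^ 2 - xc * t + t ^ 2)) ∧
    StrictMonoOn g (Set.Ioi (0 : ℝ)) := by
  have hxpos : (0:ℝ) < xc := by rw [hxc]; positivity
  have hxc3 : xc ^ 3 = 1 / 2 := by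
    rw [hxc, ← Real.rpow_natCast ((2:ℝ) ^ (-(1:ℝ)/3)) 3, ← Real.rpow_mul (by norm_num)]
    norm_num
  have hc2 : (3 : ℝ) * (2 : ℝ) ^ (-(2 : ℝ) / 3) = 3 * xc ^ 2 := by
    rw [hxc, ← Real.rpow_natCast ((2:ℝ) ^ (-(1:ℝ)/3)) 2, ← Real.rpow_mul (by norm_num)]
    norm_num
  set e : ℂ := Complex.exp (((2 * Real.pi / 3 : ℝ) : ℂ) * Complex.I) with he
  have h23 : (2 * Real.pi / 3 : ℝ) = Real.pi - Real.pi / 3 := by ring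
  have hea : e.re = -(1/2) := by
    rw [he, Complex.exp_ofReal_mul_I_re, h23, Real.cos_pi_sub, Real.cos_pi_div_three]
  have heb : e.im = Real.sqrt 3 / 2 := by
    rw [he, Complex.exp_ofReal_mul_I_im, h23, Real.sin_pi_sub, Real.sin_pi_div_three]
  have hs : Real.sqrt 3 ^ 2 = 3 := Real.sq_sqrt (by norm_num)
  have key : ∀ t : ℝ, 0 < t →
      HasDerivAt g (t ^ 2 * (t ^ 2 - 2 * xc * t + 3 * xc ^ 2) / (xc ^ 2 - xc * t + t ^ 2)) t := by
    intro t ht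
    set z : ℂ := (xc : ℂ) + (t : ℂ) * e with hz
    have hzre : z.re = xc - t / 2 := by
      simp [hz, Complex.add_re, Complex.mul_re, hea, heb]; ring
    have hzim : z.im = t * (Real.sqrt 3 / 2) := by
      simp [hz, Complex.add_im, Complex.mul_im, hea, heb]
    have hzimne : z.im ≠ 0 := by
      rw [hzim]; positivity
    have hD : (0:ℝ) < xc ^ 2 - xc * t + t ^ 2 := by nlinarith
    have hnormSq : Complex.normSq z = xc ^ 2 - xc * t + t ^ 2 := by
      rw [Complex.normSq_apply, hzre, hzim]; nlinarith [hs]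
    -- derivative of H at z
    have hlog : HasDerivAt Complex.log z⁻¹ z := Complex.hasDerivAt_log (Or.inr hzimne)
    have hpow : HasDerivAt (fun w : ℂ => w ^ 3 / 3) (z ^ 2) z := by
      have := (hasDerivAt_pow 3 z).div_const 3
      simpa using this
    have hlin : HasDerivAt (fun w : ℂ =>
        (((3 : ℝ) * (2 : ℝ) ^ (-(2 : ℝ) / 3) : ℝ) : ℂ) * w)
        (((3 : ℝ) * (2 : ℝ) ^ (-(2 : ℝ) / 3) : ℝ) : ℂ) z := by
      simpa using (hasDerivAt_id z).const_mul
        ((((3 : ℝ) * (2 : ℝ) ^ (-(2 : ℝ) / 3) : ℝ) : ℂ))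
    have hHd : HasDerivAt H
        (z ^ 2 - (((3 : ℝ) * (2 : ℝ) ^ (-(2 : ℝ) / 3) : ℝ) : ℂ) + z⁻¹) z := by
      have : HasDerivAt (fun w : ℂ => w ^ 3 / 3 -
          (((3 : ℝ) * (2 : ℝ) ^ (-(2 : ℝ) / 3) : ℝ) : ℂ) * w + Complex.log w)
          (z ^ 2 - (((3 : ℝ) * (2 : ℝ) ^ (-(2 : ℝ) / 3) : ℝ) : ℂ) + z⁻¹) z :=
        (hpow.sub hlin).add hlog
      exact this.congr_of_eventuallyEq (Filter.Eventually.of_forall fun w => (hH w))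
    have hcurve : HasDerivAt (fun w : ℂ => (xc : ℂ) + w * e) e (t : ℂ) := by
      simpa using ((hasDerivAt_id (t:ℂ)).mul_const e).const_add (xc : ℂ)
    have hcomp : HasDerivAt (fun w : ℂ => H ((xc : ℂ) + w * e))
        ((z ^ 2 - (((3 : ℝ) * (2 : ℝ) ^ (-(2 : ℝ) / 3) : ℝ) : ℂ) + z⁻¹) * e) (t : ℂ) := by
      have := hHd.comp (t : ℂ) hcurve
      exact this
    have hre := hcomp.real_of_complex
    have hval : ((z ^ 2 - (((3 : ℝ) * (2 : ℝ) ^ (-(2 : ℝ) / 3) : ℝ) : ℂ) + z⁻¹) * e).re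
        = t ^ 2 * (t ^ 2 - 2 * xc * t + 3 * xc ^ 2) / (xc ^ 2 - xc * t + t ^ 2) := by
      rw [Complex.mul_re, Complex.add_re, Complex.add_im, Complex.sub_re, Complex.sub_im,
        Complex.inv_re, Complex.inv_im, hnormSq, Complex.ofReal_re, Complex.ofReal_im]
      simp only [pow_two, Complex.mul_re, Complex.mul_im, hzre, hzim, hea, heb]
      rw [hc2]
      have hDne : (xc * xc - xc * t + t * t) ≠ 0 := by nlinarith
      rw [eq_div_iff hDne]
      field_simp
      ring_nf
      rw [hs]
      ring_nf
      have hD' : -(xc * t) + xc ^ 2 + t ^ 2 ≠ 0 := by nlinarith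
      have hu := inv_mul_cancel₀ hD'
      linear_combination (8*xc - 16*t) * hxc3 - (4*xc - 8*t) * hu
    have : HasDerivAt (fun x : ℝ => (H ((xc : ℂ) + (x : ℂ) * e)).re)
        (t ^ 2 * (t ^ 2 - 2 * xc * t + 3 * xc ^ 2) / (xc ^ 2 - xc * t + t ^ 2)) t := by
      rw [← hval]; exact hre
    exact this.congr_of_eventuallyEq (Filter.Eventually.of_forall fun x => (hg x))
  have hpos : ∀ t : ℝ, 0 < t →
      0 < t ^ 2 * (t ^ 2 - 2 * xc * t + 3 * xc ^ 2) / (xc ^ 2 - xc * t + t ^ 2) := by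
    intro t ht
    apply div_pos
    · apply mul_pos (by positivity); nlinarith [sq_nonneg (t - xc)]
    · nlinarith
  refine ⟨fun t ht => ⟨key t ht, hpos t ht⟩, ?_⟩
  apply strictMonoOn_of_deriv_pos (convex_Ioi 0)
  · intro t ht
    exact ((key t ht).continuousAt).continuousWithinAt
  · intro t ht
    rw [interior_Ioi] at ht
    rw [(key t ht).deriv]
    exact hpos t ht
end
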